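/- For two datasets D, D' of size N differing in one point (with features bounded by 1 in l_2 norm), the difference d(β) = J(β,D') - J(β,D) of the regularized multinomial logistic regression objectives satisfies ‖∇_β d(β)‖_2 ≤ 2√C/N for all β. -/

import Mathlib

open scoped BigOperators

noncomputable def logSoftmaxLoss {C d : ℕ} (x : EuclideanSpace ℝ (Fin d)) (y : Fin C)
    (β : EuclideanSpace ℝ (Fin C × Fin d)) : ℝ :=
  -Real.log (Real.exp (∑ j, β (y, j) * x j) /
    ∑ k : Fin C, Real.exp (∑ j, β (k, j) * x j))

noncomputable def regMLR {C d N : ℕ} (lam : ℝ)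
    (D : Fin N → EuclideanSpace ℝ (Fin d) × Fin C)
    (β : EuclideanSpace ℝ (Fin C × Fin d)) : ℝ :=
  (1 / (N : ℝ)) * ∑ i, logSoftmaxLoss (D i).1 (D i).2 β + lam / 2 * ‖β‖ ^ 2

open RealInnerProductSpace


noncomputable def lslVk {C d : ℕ} (x : EuclideanSpace ℝ (Fin d)) (k : Fin C) :
    EuclideanSpace ℝ (Fin C × Fin d) :=
  WithLp.toLp 2 (fun p : Fin C × Fin d => if p.1 = k then x p.2 else 0)

lemma inner_lslVk {C d : ℕ} (x : EuclideanSpace ℝ (Fin d)) (k : Fin C)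
    (β : EuclideanSpace ℝ (Fin C × Fin d)) :
    ⟪lslVk x k, β⟫ = ∑ j, β (k, j) * x j := by
  simp only [PiLp.inner_apply, RCLike.inner_apply, conj_trivial]
  rw [Fintype.sum_prod_type]
  rw [Finset.sum_eq_single k]
  · simp [lslVk, mul_comm]
  · intro b _ hb
    simp [lslVk, hb]
  · simp

noncomputable def lslS {C d : ℕ} (x : EuclideanSpace ℝ (Fin d))
    (β : EuclideanSpace ℝ (Fin C × Fin d)) : ℝ :=
  ∑ k : Fin C, Real.exp ⟪lslVk x k, β⟫

lemma lslS_pos {C d : ℕ} (hC : 0 < C) (x : EuclideanSpace ℝ (Fin d))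
    (β : EuclideanSpace ℝ (Fin C × Fin d)) : 0 < lslS x β := by
  have : Nonempty (Fin C) := ⟨⟨0, hC⟩⟩
  exact Finset.sum_pos (fun k _ => Real.exp_pos _) Finset.univ_nonempty

lemma exp_le_lslS {C d : ℕ} (x : EuclideanSpace ℝ (Fin d)) (k : Fin C)
    (β : EuclideanSpace ℝ (Fin C × Fin d)) :
    Real.exp ⟪lslVk x k, β⟫ ≤ lslS x β :=
  Finset.single_le_sum (f := fun m => Real.exp ⟪lslVk x m, β⟫)
    (fun m _ => (Real.exp_pos _).le) (Finset.mem_univ k)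

noncomputable def lslGrad {C d : ℕ} (x : EuclideanSpace ℝ (Fin d)) (y : Fin C)
    (β : EuclideanSpace ℝ (Fin C × Fin d)) : EuclideanSpace ℝ (Fin C × Fin d) :=
  (∑ k : Fin C, (Real.exp ⟪lslVk x k, β⟫ / lslS x β) • lslVk x k) - lslVk x y

lemma logSoftmaxLoss_eq {C d : ℕ} (x : EuclideanSpace ℝ (Fin d)) (y : Fin C) :
    logSoftmaxLoss x y = fun b => Real.log (lslS x b) - ⟪lslVk x y, b⟫ := by
  have hC : 0 < C := y.pos
  funext b
  unfold logSoftmaxLoss lslS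
  simp only [← inner_lslVk]
  rw [Real.log_div (Real.exp_ne_zero _)
    (by simpa [lslS] using (lslS_pos hC x b).ne'), Real.log_exp]
  ring

lemma hasGradientAt_logSoftmaxLoss {C d : ℕ} (x : EuclideanSpace ℝ (Fin d)) (y : Fin C)
    (β : EuclideanSpace ℝ (Fin C × Fin d)) :
    HasGradientAt (logSoftmaxLoss x y) (lslGrad x y β) β := by
  have hC : 0 < C := y.pos
  have hS : 0 < lslS x β := lslS_pos hC x β
  set T : Fin C → EuclideanSpace ℝ (Fin C × Fin d) →L[ℝ] ℝ :=
    fun k => InnerProductSpace.toDual ℝ _ (lslVk x k) with hT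
  have hTapp : ∀ k b, T k b = ⟪lslVk x k, b⟫ := fun k b => rfl
  have hexp : ∀ k : Fin C, HasFDerivAt (fun b => Real.exp (T k b))
      (Real.exp (T k β) • T k) β := fun k =>
    (Real.hasDerivAt_exp (T k β)).comp_hasFDerivAt β ((T k).hasFDerivAt)
  have hsum : HasFDerivAt (fun b => ∑ k : Fin C, Real.exp (T k b))
      (∑ k : Fin C, Real.exp (T k β) • T k) β := HasFDerivAt.fun_sum fun k _ => hexp k
  have hSeq : ∀ b, lslS x b = ∑ k : Fin C, Real.exp (T k b) := fun b => rfl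
  have hlog : HasFDerivAt (fun b => Real.log (lslS x b))
      ((lslS x β)⁻¹ • ∑ k : Fin C, Real.exp (T k β) • T k) β := by
    have := (Real.hasDerivAt_log (by rw [hSeq] at hS; exact hS.ne')).comp_hasFDerivAt β hsum
    exact this
  have htot : HasFDerivAt (fun b => Real.log (lslS x b) - ⟪lslVk x y, b⟫)
      (((lslS x β)⁻¹ • ∑ k : Fin C, Real.exp (T k β) • T k) - T y) β :=
    hlog.sub ((T y).hasFDerivAt)
  rw [logSoftmaxLoss_eq, hasGradientAt_iff_hasFDerivAt]
  refine htot.congr_fderiv (Eq.symm ?_)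
  rw [lslGrad]
  rw [map_sub, map_sum]
  congr 1
  · rw [Finset.smul_sum]
    refine Finset.sum_congr rfl fun k _ => ?_
    rw [LinearIsometryEquiv.map_smulₛₗ]
    rw [smul_smul]
    congr 1
    · simp [hTapp, div_eq_inv_mul]

lemma euclid_sum_apply {ι α : Type*} [Fintype ι] (v : ι → EuclideanSpace ℝ α) (p : α) :
    (∑ k : ι, v k) p = ∑ k : ι, v k p := by
  induction (Finset.univ : Finset ι) using Finset.cons_induction with
  | empty => rfl
  | cons a s ha ih => rw [Finset.sum_cons, Finset.sum_cons, ← ih]; rfl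

lemma lslGrad_apply {C d : ℕ} (x : EuclideanSpace ℝ (Fin d)) (y : Fin C)
    (β : EuclideanSpace ℝ (Fin C × Fin d)) (p : Fin C × Fin d) :
    lslGrad x y β p =
      (Real.exp ⟪lslVk x p.1, β⟫ / lslS x β - if p.1 = y then 1 else 0) * x p.2 := by
  simp only [lslGrad, PiLp.sub_apply]
  rw [euclid_sum_apply]
  simp only [PiLp.smul_apply, smul_eq_mul]
  rw [Finset.sum_eq_single p.1]
  · simp [lslVk]
    split <;> ring
  · intro b _ hb
    have h0 : lslVk x b p = 0 := by
      simp only [lslVk]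
      exact if_neg (Ne.symm hb)
    rw [h0, mul_zero]
  · simp

lemma norm_lslGrad_le {C d : ℕ} (x : EuclideanSpace ℝ (Fin d)) (hx : ‖x‖ ≤ 1) (y : Fin C)
    (β : EuclideanSpace ℝ (Fin C × Fin d)) :
    ‖lslGrad x y β‖ ≤ Real.sqrt C := by
  have hC : 0 < C := y.pos
  have hS : 0 < lslS x β := lslS_pos hC x β
  have hxsq : ∑ j, x j ^ 2 ≤ 1 := by
    have h1 : ‖x‖ = Real.sqrt (∑ j, ‖x j‖ ^ 2) := EuclideanSpace.norm_eq x
    have h2 : ∑ j, x j ^ 2 = ‖x‖ ^ 2 := by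
      rw [h1, Real.sq_sqrt (by positivity)]
      simp [Real.norm_eq_abs, sq_abs]
    rw [h2]
    nlinarith [norm_nonneg x]
  rw [EuclideanSpace.norm_eq]
  rw [show Real.sqrt (C : ℝ) = Real.sqrt ((C : ℝ) * 1) by rw [mul_one]]
  apply Real.sqrt_le_sqrt
  calc ∑ p : Fin C × Fin d, ‖lslGrad x y β p‖ ^ 2
      = ∑ k : Fin C, (Real.exp ⟪lslVk x k, β⟫ / lslS x β - if k = y then 1 else 0) ^ 2
          * ∑ j, x j ^ 2 := by
        rw [Fintype.sum_prod_type]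
        refine Finset.sum_congr rfl fun k _ => ?_
        rw [Finset.mul_sum]
        refine Finset.sum_congr rfl fun j _ => ?_
        rw [lslGrad_apply]
        rw [Real.norm_eq_abs, sq_abs]
        ring
    _ ≤ ∑ k : Fin C, 1 * 1 := by
        refine Finset.sum_le_sum fun k _ => ?_
        have hc0 : 0 ≤ Real.exp ⟪lslVk x k, β⟫ / lslS x β := by positivity
        have hc1 : Real.exp ⟪lslVk x k, β⟫ / lslS x β ≤ 1 :=
          (div_le_one hS).2 (exp_le_lslS x k β)
        have hsq : (Real.exp ⟪lslVk x k, β⟫ / lslS x β - if k = y then 1 else 0) ^ 2 ≤ 1 := by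
          split <;> nlinarith
        have hxnn : 0 ≤ ∑ j, x j ^ 2 := by positivity
        exact mul_le_mul hsq hxsq hxnn one_pos.le
    _ = (C : ℝ) * 1 := by simp

theorem regMLR_diff_gradient_bound (C d N : ℕ) (hN : 0 < N) (lam : ℝ) (hlam : 0 < lam)
    (D D' : Fin N → EuclideanSpace ℝ (Fin d) × Fin C)
    (hx : ∀ i, ‖(D i).1‖ ≤ 1) (hx' : ∀ i, ‖(D' i).1‖ ≤ 1)
    (hadj : ∃ i₀, ∀ i, i ≠ i₀ → D i = D' i) :
    ∀ β : EuclideanSpace ℝ (Fin C × Fin d),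
      ‖gradient (fun b => regMLR lam D' b - regMLR lam D b) β‖ ≤ 2 * Real.sqrt C / N := by
  intro β
  obtain ⟨i₀, hadj⟩ := hadj
  have hfun : (fun b => regMLR lam D' b - regMLR lam D b) =
      fun b => (1 / (N : ℝ)) • (logSoftmaxLoss (D' i₀).1 (D' i₀).2 b
        - logSoftmaxLoss (D i₀).1 (D i₀).2 b) := by
    funext b
    have hsum : (∑ i, logSoftmaxLoss (D' i).1 (D' i).2 b)
        - ∑ i, logSoftmaxLoss (D i).1 (D i).2 b
        = logSoftmaxLoss (D' i₀).1 (D' i₀).2 b - logSoftmaxLoss (D i₀).1 (D i₀).2 b := by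
      rw [← Finset.sum_sub_distrib]
      rw [Finset.sum_eq_single i₀]
      · intro i _ hi
        rw [hadj i hi, sub_self]
      · simp
    simp only [regMLR, smul_eq_mul]
    rw [← hsum]
    ring
  rw [hfun]
  set g' := lslGrad (D' i₀).1 (D' i₀).2 β with hg'
  set g := lslGrad (D i₀).1 (D i₀).2 β with hg
  have hG : HasGradientAt (fun b => (1 / (N : ℝ)) • (logSoftmaxLoss (D' i₀).1 (D' i₀).2 b
      - logSoftmaxLoss (D i₀).1 (D i₀).2 b)) ((1 / (N : ℝ)) • (g' - g)) β := by
    rw [hasGradientAt_iff_hasFDerivAt]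
    have h1 := (hasGradientAt_logSoftmaxLoss (D' i₀).1 (D' i₀).2 β).hasFDerivAt
    have h2 := (hasGradientAt_logSoftmaxLoss (D i₀).1 (D i₀).2 β).hasFDerivAt
    have h3 := (h1.sub h2).const_smul (1 / (N : ℝ))
    refine h3.congr_fderiv (Eq.symm ?_)
    rw [map_smul, map_sub]
  rw [hG.gradient]
  have hb1 : ‖g'‖ ≤ Real.sqrt C := norm_lslGrad_le _ (hx' i₀) _ β
  have hb2 : ‖g‖ ≤ Real.sqrt C := norm_lslGrad_le _ (hx i₀) _ β
  have hNpos : (0 : ℝ) < N := by exact_mod_cast hN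
  rw [norm_smul]
  have : ‖g' - g‖ ≤ 2 * Real.sqrt C :=
    (norm_sub_le g' g).trans (by linarith)
  calc ‖(1 / (N : ℝ))‖ * ‖g' - g‖ ≤ (1 / N) * (2 * Real.sqrt C) := by
        rw [Real.norm_eq_abs, abs_of_pos (by positivity)]
        exact mul_le_mul_of_nonneg_left this (by positivity)
    _ = 2 * Real.sqrt C / N := by ring
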